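/- Let ⟪-,-⟫₁ and ⟪-,-⟫₂ be double brackets on A associated with the left and right bimodule structures respectively, with ⟪-,-⟫₁ = ° ∘ ⟪-,-⟫₂. If either ⟪-,-⟫₁ is [(12),(13)]-weak Poisson or ⟪-,-⟫₂ is (12)-weak Poisson, then both conditions hold and the two double brackets induce the same Poisson bracket on the symmetric algebra Sym(A/[A,A]): the unique Poisson brackets {-,-}_{j,Sym} determined by {ā,b̄}_{j,Sym} = π₂(⟪a,b⟫_j) coincide for j = 1,2. -/

import Mathlib

/-!
The swap intertwines the two double Jacobiators, `⟪a,b,c⟫₂ = -τ_{(12)}⟪a,c,b⟫₁`, so the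
`(12)`-weak Poisson condition for `⟪-,-⟫₂` at `(a,b,c)` is the `[(12),(13)]`-weak Poisson
condition for `⟪-,-⟫₁` at `(b,c,a)`.

Since `π₂` is swap-invariant, `π₂ ∘ ⟪-,-⟫₁ = π₂ ∘ ⟪-,-⟫₂`, and the Leibniz rule for the left
bimodule structure gives `π₂⟪a,bc⟫₁ = π₂⟪a,cb⟫₁`; so this bracket descends to an antisymmetric
bilinear form on `A/[A,A]`. Choosing a basis, `Sym(A/[A,A])` is a polynomial ring, on which such
a form extends to a biderivation; a biderivation is determined by its values on generators,
which gives uniqueness and antisymmetry. The Jacobiator of an antisymmetric biderivation is a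
derivation in each argument, so it vanishes once it vanishes on generators, where it equals
`π₃⟪a,b,c⟫ - π₃⟪a,c,b⟫`.
-/

open scoped TensorProduct

noncomputable section

/-- A (`k`-linear) `A`-bimodule-type structure on a `k`-module `M`,
given by a three-slot action `a · d · b`. -/
structure BimodOn (k A M : Type*) [CommSemiring k] [Ring A] [Algebra k A]
    [AddCommMonoid M] [Module k M] where
  act : A → M → A → M
  add_left : ∀ (a a' : A) (d : M) (b : A), act (a + a') d b = act a d b + act a' d b
  add_mid : ∀ (a : A) (d d' : M) (b : A), act a (d + d') b = act a d b + act a d' b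
  add_right : ∀ (a : A) (d : M) (b b' : A), act a d (b + b') = act a d b + act a d b'
  smul_left : ∀ (c : k) (a : A) (d : M) (b : A), act (c • a) d b = c • act a d b
  smul_mid : ∀ (c : k) (a : A) (d : M) (b : A), act a (c • d) b = c • act a d b
  smul_right : ∀ (c : k) (a : A) (d : M) (b : A), act a d (c • b) = c • act a d b
  act_one_one : ∀ d : M, act 1 d 1 = d
  act_mul : ∀ (a a' : A) (d : M) (b b' : A), act a (act a' d b') b = act (a * a') d (b' * b)

/-- An `A`-bimodule structure on `A ⊗[k] A`. -/
abbrev BimodStr (k A : Type*) [CommSemiring k] [Ring A] [Algebra k A] :=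
  BimodOn k A (A ⊗[k] A)

section Defs

variable (k A : Type*) [CommSemiring k] [Ring A] [Algebra k A]

/-- The swap automorphism `°` of `A ⊗[k] A`, `a ⊗ b ↦ b ⊗ a`. -/
def swapT : A ⊗[k] A →ₗ[k] A ⊗[k] A := (TensorProduct.comm k A A).toLinearMap

variable {k A}

namespace BimodOn

/-- The swap bimodule structure `a * d * b = (a · d° · b)°` associated with a
bimodule structure on `A ⊗[k] A`. -/
def star (S : BimodStr k A) (a : A) (d : A ⊗[k] A) (b : A) : A ⊗[k] A :=
  swapT k A (S.act a (swapT k A d) b)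

/-- A bimodule structure on `A ⊗[k] A` is swap-commuting if it commutes with its
swap bimodule structure. -/
def SwapCommuting (S : BimodStr k A) : Prop :=
  ∀ (a₁ a₂ b₁ b₂ : A) (d : A ⊗[k] A),
    S.act a₁ (S.star a₂ d b₂) b₁ = S.star a₂ (S.act a₁ d b₁) b₂

end BimodOn

end Defs

/-- A double bracket on `A` associated with a bimodule structure `S` on `A ⊗[k] A`
(with swap bimodule structure `S.star`). -/
structure DoubleBracket {k A : Type*} [CommSemiring k] [Ring A] [Algebra k A]
    (S : BimodStr k A) where
  br : A →ₗ[k] A →ₗ[k] A ⊗[k] A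
  antisymm : ∀ a b : A, br a b = - swapT k A (br b a)
  leibniz_right : ∀ a b c : A, br a (b * c) = S.act b (br a c) 1 + S.act 1 (br a b) c
  leibniz_left : ∀ a b c : A, br (b * c) a = S.star b (br c a) 1 + S.star 1 (br b a) c

section Taus

variable (k A : Type*) [CommSemiring k] [Ring A] [Algebra k A]

/-- `τ_{(123)}` on `A^{⊗3}`: `a ⊗ b ⊗ c ↦ c ⊗ a ⊗ b`. -/
def tau123 : (A ⊗[k] A) ⊗[k] A →ₗ[k] (A ⊗[k] A) ⊗[k] A :=
  ((TensorProduct.comm k (A ⊗[k] A) A).trans (TensorProduct.assoc k A A A).symm).toLinearMap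

/-- `τ_{(132)}` on `A^{⊗3}`: `a ⊗ b ⊗ c ↦ b ⊗ c ⊗ a`. -/
def tau132 : (A ⊗[k] A) ⊗[k] A →ₗ[k] (A ⊗[k] A) ⊗[k] A :=
  ((TensorProduct.assoc k A A A).trans (TensorProduct.comm k A (A ⊗[k] A))).toLinearMap

/-- `τ_{(12)}` on `A^{⊗3}`: `a ⊗ b ⊗ c ↦ b ⊗ a ⊗ c`. -/
def tau12 : (A ⊗[k] A) ⊗[k] A →ₗ[k] (A ⊗[k] A) ⊗[k] A :=
  (TensorProduct.congr (TensorProduct.comm k A A) (LinearEquiv.refl k A)).toLinearMap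

variable {k A}

/-- `⟪a, -⟫_L : A ⊗ A → A ⊗ A ⊗ A`, `b₁ ⊗ b₂ ↦ ⟪a, b₁⟫ ⊗ b₂`. -/
def trL (br : A →ₗ[k] A →ₗ[k] A ⊗[k] A) (a : A) :
    A ⊗[k] A →ₗ[k] (A ⊗[k] A) ⊗[k] A :=
  TensorProduct.map (br a) LinearMap.id

/-- The double Jacobiator of a bilinear operation `A × A → A ⊗ A`:
`⟪a,b,c⟫ = ⟪a,⟪b,c⟫⟫_L + τ_{(123)} ⟪b,⟪c,a⟫⟫_L + τ_{(132)} ⟪c,⟪a,b⟫⟫_L`. -/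
def jac (br : A →ₗ[k] A →ₗ[k] A ⊗[k] A) (a b c : A) : (A ⊗[k] A) ⊗[k] A :=
  trL br a (br b c) + tau123 k A (trL br b (br c a)) + tau132 k A (trL br c (br a b))

end Taus

end

/-- The `k`-span of commutators `[A,A]` in `A`. -/
def commSpan (k A : Type*) [CommSemiring k] [Ring A] [Algebra k A] : Submodule k A :=
  Submodule.span k {x : A | ∃ a b : A, x = a * b - b * a}

/-- `π₂ : A ⊗ A → R`, `x ⊗ y ↦ (ι x̄)(ι ȳ)`, for a commutative algebra `R` receiving
`A/[A,A]` through a linear map `ι`. -/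
noncomputable def piTwo {k A R : Type*} [CommRing k] [Ring A] [Algebra k A]
    [CommRing R] [Algebra k R] (ι : (A ⧸ commSpan k A) →ₗ[k] R) :
    A ⊗[k] A →ₗ[k] R :=
  TensorProduct.lift ((LinearMap.mul k R).compl₁₂
    (ι.comp (commSpan k A).mkQ) (ι.comp (commSpan k A).mkQ))

universe u

open TensorProduct

section Permutations

variable {k A : Type*} [CommSemiring k] [Ring A] [Algebra k A]

@[simp] lemma swapT_tmul (a b : A) : swapT k A (a ⊗ₜ[k] b) = b ⊗ₜ[k] a := rfl

@[simp] lemma swapT_swapT (d : A ⊗[k] A) : swapT k A (swapT k A d) = d :=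
  (TensorProduct.comm k A A).symm_apply_apply d

@[simp] lemma tau12_tmul (d : A ⊗[k] A) (c : A) :
    tau12 k A (d ⊗ₜ[k] c) = swapT k A d ⊗ₜ[k] c := rfl

@[simp] lemma tau123_tmul (a b c : A) :
    tau123 k A ((a ⊗ₜ[k] b) ⊗ₜ[k] c) = (c ⊗ₜ[k] a) ⊗ₜ[k] b := rfl

@[simp] lemma tau132_tmul (a b c : A) :
    tau132 k A ((a ⊗ₜ[k] b) ⊗ₜ[k] c) = (b ⊗ₜ[k] c) ⊗ₜ[k] a := rfl

lemma tau12_tau12 (t : (A ⊗[k] A) ⊗[k] A) : tau12 k A (tau12 k A t) = t :=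
  LinearMap.congr_fun (ext_threefold (g := tau12 k A ∘ₗ tau12 k A) (h := LinearMap.id)
    fun _ _ _ => rfl) t

lemma tau123_tau12 (t : (A ⊗[k] A) ⊗[k] A) :
    tau123 k A (tau12 k A t) = tau12 k A (tau132 k A t) :=
  LinearMap.congr_fun (ext_threefold (g := tau123 k A ∘ₗ tau12 k A)
    (h := tau12 k A ∘ₗ tau132 k A) fun _ _ _ => rfl) t

lemma tau132_tau12 (t : (A ⊗[k] A) ⊗[k] A) :
    tau132 k A (tau12 k A t) = tau12 k A (tau123 k A t) :=
  LinearMap.congr_fun (ext_threefold (g := tau132 k A ∘ₗ tau12 k A)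
    (h := tau12 k A ∘ₗ tau123 k A) fun _ _ _ => rfl) t

end Permutations

section Jacobiator

variable {k A : Type*} [CommSemiring k] [Ring A] [Algebra k A]

lemma trL_tmul (br : A →ₗ[k] A →ₗ[k] A ⊗[k] A) (a b c : A) :
    trL br a (b ⊗ₜ[k] c) = br a b ⊗ₜ[k] c := rfl

lemma trL_of_swapT {br₁ br₂ : A →ₗ[k] A →ₗ[k] A ⊗[k] A}
    (h : ∀ a b, br₂ a b = swapT k A (br₁ a b)) (a : A) (d : A ⊗[k] A) :
    trL br₂ a d = tau12 k A (trL br₁ a d) := by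
  induction d using TensorProduct.induction_on with
  | zero => simp
  | tmul b c => rw [trL_tmul, trL_tmul, tau12_tmul, h]
  | add x y hx hy => rw [map_add, map_add, map_add, hx, hy]

theorem jac_of_swapT {br₁ br₂ : A →ₗ[k] A →ₗ[k] A ⊗[k] A}
    (hbr : ∀ a b, br₁ a b = swapT k A (br₂ a b))
    (hanti : ∀ a b, br₁ a b = -swapT k A (br₁ b a)) (a b c : A) :
    jac br₂ a b c = -tau12 k A (jac br₁ a c b) := by
  have hswap : ∀ x y, br₂ x y = swapT k A (br₁ x y) := fun x y => by rw [hbr, swapT_swapT]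
  have hneg : ∀ x y, br₂ x y = -br₁ y x := fun x y => by rw [hswap, hanti y x, neg_neg]
  simp only [jac, trL_of_swapT hswap, hneg, map_neg, map_add, tau123_tau12, tau132_tau12]
  abel

theorem weakPoisson_swapT_iff {br₁ br₂ : A →ₗ[k] A →ₗ[k] A ⊗[k] A}
    (hbr : ∀ a b, br₁ a b = swapT k A (br₂ a b))
    (hanti : ∀ a b, br₁ a b = -swapT k A (br₁ b a)) :
    (∀ a b c, jac br₂ a b c = tau12 k A (jac br₂ b a c)) ↔
      ∀ a b c, jac br₁ a b c = tau12 k A (jac br₁ c b a) := by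
  have key : ∀ a b c, jac br₂ a b c = tau12 k A (jac br₂ b a c) ↔
      jac br₁ b c a = tau12 k A (jac br₁ a c b) := fun a b c => by
    rw [jac_of_swapT hbr hanti, jac_of_swapT hbr hanti, map_neg, tau12_tau12, neg_inj, eq_comm]
  exact ⟨fun h a b c => (key c a b).mp (h c a b), fun h a b c => (key a b c).mpr (h b c a)⟩

end Jacobiator

section Traces

variable {k A R : Type*} [CommRing k] [Ring A] [Algebra k A] [CommRing R] [Algebra k R]

lemma commSpan_mk_mul_comm (a b : A) :
    (Submodule.Quotient.mk (a * b) : A ⧸ commSpan k A) = Submodule.Quotient.mk (b * a) :=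
  (Submodule.Quotient.eq _).mpr (Submodule.subset_span ⟨a, b, rfl⟩)

variable (ι : (A ⧸ commSpan k A) →ₗ[k] R)

lemma piTwo_tmul (a b : A) :
    piTwo ι (a ⊗ₜ[k] b) = ι (Submodule.Quotient.mk a) * ι (Submodule.Quotient.mk b) := rfl

lemma piTwo_swapT (d : A ⊗[k] A) : piTwo ι (swapT k A d) = piTwo ι d := by
  induction d using TensorProduct.induction_on with
  | zero => simp
  | tmul a b => rw [swapT_tmul, piTwo_tmul, piTwo_tmul, mul_comm]
  | add x y hx hy => rw [map_add, map_add, map_add, hx, hy]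

lemma piTwo_tmul_one_mul (a : A) (d : A ⊗[k] A) :
    piTwo ι ((a ⊗ₜ[k] 1) * d) = piTwo ι (d * (a ⊗ₜ[k] 1)) := by
  induction d using TensorProduct.induction_on with
  | zero => simp
  | tmul b c =>
    rw [Algebra.TensorProduct.tmul_mul_tmul, Algebra.TensorProduct.tmul_mul_tmul, piTwo_tmul,
      piTwo_tmul, one_mul, mul_one, commSpan_mk_mul_comm]
  | add x y hx hy => rw [mul_add, add_mul, map_add, map_add, hx, hy]

/-- `π₃ : A ⊗ A ⊗ A → R`, `x ⊗ y ⊗ z ↦ x̄ ȳ z̄`. -/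
noncomputable def piThree : (A ⊗[k] A) ⊗[k] A →ₗ[k] R :=
  TensorProduct.lift ((LinearMap.mul k R).compl₁₂ (piTwo ι) (ι ∘ₗ (commSpan k A).mkQ))

lemma piThree_tmul (d : A ⊗[k] A) (c : A) :
    piThree ι (d ⊗ₜ[k] c) = piTwo ι d * ι (Submodule.Quotient.mk c) := rfl

lemma piThree_tau12 (t : (A ⊗[k] A) ⊗[k] A) : piThree ι (tau12 k A t) = piThree ι t := by
  induction t using TensorProduct.induction_on with
  | zero => simp
  | tmul d c => rw [tau12_tmul, piThree_tmul, piThree_tmul, piTwo_swapT]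
  | add x y hx hy => rw [map_add, map_add, map_add, hx, hy]

lemma piThree_tau123 (t : (A ⊗[k] A) ⊗[k] A) : piThree ι (tau123 k A t) = piThree ι t :=
  LinearMap.congr_fun (ext_threefold (g := piThree ι ∘ₗ tau123 k A) (h := piThree ι)
    fun a b c => by
      simp only [LinearMap.comp_apply, tau123_tmul, piThree_tmul, piTwo_tmul]
      ring) t

lemma piThree_tau132 (t : (A ⊗[k] A) ⊗[k] A) : piThree ι (tau132 k A t) = piThree ι t :=
  LinearMap.congr_fun (ext_threefold (g := piThree ι ∘ₗ tau132 k A) (h := piThree ι)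
    fun a b c => by
      simp only [LinearMap.comp_apply, tau132_tmul, piThree_tmul, piTwo_tmul]
      ring) t

lemma piThree_jac (br : A →ₗ[k] A →ₗ[k] A ⊗[k] A) (a b c : A) :
    piThree ι (jac br a b c) = piThree ι (trL br a (br b c)) + piThree ι (trL br b (br c a))
      + piThree ι (trL br c (br a b)) := by
  rw [jac, map_add, map_add, piThree_tau123, piThree_tau132]

end Traces

section Descent

variable {k A R : Type*} [CommRing k] [Ring A] [Algebra k A] [CommRing R] [Algebra k R]
  (ι : (A ⧸ commSpan k A) →ₗ[k] R) {S : BimodStr k A} (D : DoubleBracket S)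

lemma DoubleBracket.piTwo_br_swap (a b : A) :
    piTwo ι (D.br a b) = -piTwo ι (D.br b a) := by
  rw [D.antisymm, map_neg, piTwo_swapT]

variable (hS : ∀ (a b : A) (d : A ⊗[k] A), S.act a d b = (a ⊗ₜ[k] 1) * d * (b ⊗ₜ[k] 1))
include hS

lemma DoubleBracket.piTwo_br_mul_comm (a b c : A) :
    piTwo ι (D.br a (b * c)) = piTwo ι (D.br a (c * b)) := by
  simp only [D.leibniz_right, hS, Algebra.TensorProduct.one_def.symm, mul_one, one_mul, map_add,
    piTwo_tmul_one_mul]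
  exact add_comm _ _

lemma DoubleBracket.piTwo_br_eq_zero_of_mem (a : A) {c : A} (hc : c ∈ commSpan k A) :
    piTwo ι (D.br a c) = 0 := by
  induction hc using Submodule.span_induction with
  | mem x hx =>
    obtain ⟨b, c, rfl⟩ := hx
    rw [map_sub, map_sub, D.piTwo_br_mul_comm ι hS, sub_self]
  | zero => simp
  | add x y _ _ hx hy => rw [map_add, map_add, hx, hy, add_zero]
  | smul r x _ hx => rw [map_smul, map_smul, hx, smul_zero]

theorem DoubleBracket.exists_bilin_quotient_piTwo_br :
    ∃ B : (A ⧸ commSpan k A) →ₗ[k] (A ⧸ commSpan k A) →ₗ[k] R,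
      ∀ a b : A, B (Submodule.Quotient.mk a) (Submodule.Quotient.mk b) = piTwo ι (D.br a b) := by
  let F := D.br.compr₂ (piTwo ι)
  have hright : commSpan k A ≤ LinearMap.ker F.flip := fun c hc =>
    LinearMap.ext fun a => D.piTwo_br_eq_zero_of_mem ι hS a hc
  have hleft : commSpan k A ≤ LinearMap.ker ((commSpan k A).liftQ F.flip hright).flip :=
    fun c hc => by
      refine LinearMap.ext fun w => ?_
      obtain ⟨b, rfl⟩ := Submodule.Quotient.mk_surjective _ w
      change piTwo ι (D.br c b) = 0
      rw [D.piTwo_br_swap, D.piTwo_br_eq_zero_of_mem ι hS b hc, neg_zero]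
  exact ⟨(commSpan k A).liftQ _ hleft, fun a b => rfl⟩

end Descent

section Biderivation

variable {k V R : Type*} [CommRing k] [AddCommGroup V] [Module k V] [CommRing R] [Algebra k R]

structure IsBiderivation (P : R →ₗ[k] R →ₗ[k] R) : Prop where
  leibniz_right : ∀ x y z : R, P x (y * z) = y * P x z + P x y * z
  leibniz_left : ∀ x y z : R, P (x * y) z = x * P y z + y * P x z

namespace IsBiderivation

variable {P Q : R →ₗ[k] R →ₗ[k] R}

lemma add (hP : IsBiderivation P) (hQ : IsBiderivation Q) : IsBiderivation (P + Q) where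
  leibniz_right x y z := by
    simp only [LinearMap.add_apply, hP.leibniz_right, hQ.leibniz_right]; ring
  leibniz_left x y z := by simp only [LinearMap.add_apply, hP.leibniz_left, hQ.leibniz_left]; ring

lemma sub (hP : IsBiderivation P) (hQ : IsBiderivation Q) : IsBiderivation (P - Q) where
  leibniz_right x y z := by
    simp only [LinearMap.sub_apply, hP.leibniz_right, hQ.leibniz_right]; ring
  leibniz_left x y z := by simp only [LinearMap.sub_apply, hP.leibniz_left, hQ.leibniz_left]; ring

lemma flip (hP : IsBiderivation P) : IsBiderivation P.flip where
  leibniz_right x y z := by simp only [LinearMap.flip_apply, hP.leibniz_left]; ring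
  leibniz_left x y z := by simp only [LinearMap.flip_apply, hP.leibniz_right]; ring

end IsBiderivation

def jacobiator (P : R →ₗ[k] R →ₗ[k] R) (x y z : R) : R :=
  P x (P y z) + P y (P z x) + P z (P x y)

lemma jacobiator_cyclic (P : R →ₗ[k] R →ₗ[k] R) (x y z : R) :
    jacobiator P x y z = jacobiator P y z x := by
  unfold jacobiator; abel

lemma IsBiderivation.jacobiator_mul_left {P : R →ₗ[k] R →ₗ[k] R} (hP : IsBiderivation P)
    (hanti : ∀ x y, P x y = -P y x) (x x' y z : R) :
    jacobiator P (x * x') y z = x * jacobiator P x' y z + x' * jacobiator P x y z := by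
  simp only [jacobiator, hP.leibniz_left, hP.leibniz_right, map_add, hanti y x, hanti y x']
  ring

namespace IsSymmetricAlgebra

variable {ι : V →ₗ[k] R} (hι : IsSymmetricAlgebra ι)
include hι

theorem eq_zero_of_leibniz (L : R →ₗ[k] R) (hL : ∀ x y, L (x * y) = x * L y + y * L x)
    (h : ∀ v, L (ι v) = 0) : L = 0 := by
  have hone : L 1 = 0 := by simpa using hL 1 1
  refine LinearMap.ext fun r => ?_
  induction r using hι.induction with
  | algebraMap c =>
    rw [Algebra.algebraMap_eq_smul_one, map_smul, hone, smul_zero, LinearMap.zero_apply]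
  | ι v => exact h v
  | mul x y hx hy => simp_all
  | add x y hx hy => simp_all

theorem biderivation_eq_zero {P : R →ₗ[k] R →ₗ[k] R} (hP : IsBiderivation P)
    (h : ∀ v w, P (ι v) (ι w) = 0) : P = 0 := by
  have hgen : ∀ v, P (ι v) = 0 := fun v =>
    hι.eq_zero_of_leibniz _ (fun x y => by rw [hP.leibniz_right, mul_comm (P _ x)]) (h v)
  refine LinearMap.ext fun x => LinearMap.ext fun y => LinearMap.congr_fun
    (hι.eq_zero_of_leibniz (P.flip y) (fun x x' => hP.leibniz_left x x' y)
      fun v => by rw [LinearMap.flip_apply, hgen]; rfl) x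

theorem biderivation_ext {P Q : R →ₗ[k] R →ₗ[k] R} (hP : IsBiderivation P)
    (hQ : IsBiderivation Q) (h : ∀ v w, P (ι v) (ι w) = Q (ι v) (ι w)) : P = Q :=
  sub_eq_zero.mp <| hι.biderivation_eq_zero (hP.sub hQ) fun v w => sub_eq_zero.mpr (h v w)

theorem antisymm_of_biderivation {P : R →ₗ[k] R →ₗ[k] R} (hP : IsBiderivation P)
    (h : ∀ v w, P (ι v) (ι w) = -P (ι w) (ι v)) (x y : R) : P x y = -P y x := by
  have := hι.biderivation_eq_zero (hP.add hP.flip) fun v w => by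
    rw [LinearMap.add_apply, LinearMap.add_apply, LinearMap.flip_apply, h, neg_add_cancel]
  exact eq_neg_of_add_eq_zero_left (LinearMap.congr_fun₂ this x y)

theorem jacobiator_eq_zero {P : R →ₗ[k] R →ₗ[k] R} (hP : IsBiderivation P)
    (hanti : ∀ x y, P x y = -P y x) (h : ∀ u v w, jacobiator P (ι u) (ι v) (ι w) = 0)
    (x y z : R) : jacobiator P x y z = 0 := by
  have extend : ∀ y z, (∀ v, jacobiator P (ι v) y z = 0) → ∀ x, jacobiator P x y z = 0 :=
    fun y z hgen x => LinearMap.congr_fun (hι.eq_zero_of_leibniz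
      (P.flip (P y z) + P y ∘ₗ P z + P z ∘ₗ P.flip y)
      (hP.jacobiator_mul_left hanti · · y z) hgen) x
  have h₂ : ∀ v w z, jacobiator P (ι v) (ι w) z = 0 := fun v w z => by
    rw [jacobiator_cyclic, jacobiator_cyclic]
    exact extend _ _ (fun u => h u v w) z
  have h₁ : ∀ v y z, jacobiator P (ι v) y z = 0 := fun v y z => by
    rw [jacobiator_cyclic]
    exact extend _ _ (fun w => by rw [← jacobiator_cyclic]; exact h₂ v w z) y
  exact extend y z (fun v => h₁ v y z) x

end IsSymmetricAlgebra

end Biderivation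

section SymmetricAlgebra

variable {k V R : Type*} [CommRing k] [AddCommGroup V] [Module k V] [CommRing R] [Algebra k R]
  {ι : V →ₗ[k] R}

theorem IsSymmetricAlgebra.exists_biderivation [Module.Free k V] (hι : IsSymmetricAlgebra ι)
    (B : V →ₗ[k] V →ₗ[k] R) :
    ∃ P : R →ₗ[k] R →ₗ[k] R, IsBiderivation P ∧ ∀ v w, P (ι v) (ι w) = B v w := by
  let b := Module.Free.chooseBasis k V
  let E := hι.equiv.symm.trans (SymmetricAlgebra.equivMvPolynomial b)
  have hE : ∀ i, E (ι (b i)) = MvPolynomial.X i := fun i => by simp [E]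
  let Ψ := MvPolynomial.mkDerivation k fun i =>
    MvPolynomial.mkDerivation k fun j => E (B (b i) (b j))
  let P : R →ₗ[k] R →ₗ[k] R := LinearMap.mk₂ k (fun x y => E.symm (Ψ (E x) (E y)))
    (fun x x' y => by simp) (fun c x y => by simp) (fun x y y' => by simp) (fun c x y => by simp)
  refine ⟨P, ⟨fun x y z => ?_, fun x y z => ?_⟩, fun v w => ?_⟩
  · simp only [P, LinearMap.mk₂_apply, map_mul, Derivation.leibniz, smul_eq_mul, map_add,
      AlgEquiv.symm_apply_apply]
    ring
  · simp only [P, LinearMap.mk₂_apply, map_mul, Derivation.leibniz, Derivation.add_apply,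
      Derivation.smul_apply, smul_eq_mul, map_add, AlgEquiv.symm_apply_apply]
  · have hPB : P.compl₁₂ ι ι = B := b.ext fun i => b.ext fun j => by
      simp only [P, Ψ, LinearMap.compl₁₂_apply, LinearMap.mk₂_apply, hE,
        MvPolynomial.mkDerivation_X, AlgEquiv.symm_apply_apply]
    exact LinearMap.congr_fun₂ hPB v w

theorem isSymmetricAlgebra_of_existsUnique {k V R : Type u} [CommRing k] [AddCommGroup V]
    [Module k V] [CommRing R] [Algebra k R] {ι : V →ₗ[k] R}
    (h : ∀ (B : Type u) [CommRing B] [Algebra k B] (f : V →ₗ[k] B),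
      ∃! g : R →ₐ[k] B, ∀ q, g (ι q) = f q) :
    IsSymmetricAlgebra ι := by
  obtain ⟨g, hg, -⟩ := h (SymmetricAlgebra k V) (SymmetricAlgebra.ι k V)
  refine .of_equiv (AlgEquiv.ofAlgHom (SymmetricAlgebra.lift ι) g ?_ ?_) ?_
  · exact (h R ι).unique (fun q => by simp [hg]) (fun q => rfl)
  · exact SymmetricAlgebra.algHom_ext (LinearMap.ext fun v => by simp [hg])
  · exact LinearMap.ext fun v => by simp

end SymmetricAlgebra

section InducedBracket

variable {k A R : Type*} [CommRing k] [Ring A] [Algebra k A] [CommRing R] [Algebra k R]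
  {ι : (A ⧸ commSpan k A) →ₗ[k] R} {P : R →ₗ[k] R →ₗ[k] R} {br : A →ₗ[k] A →ₗ[k] A ⊗[k] A}

lemma apply_piTwo_eq_piThree (hP : IsBiderivation P)
    (hgen : ∀ a b : A, P (ι (Submodule.Quotient.mk a)) (ι (Submodule.Quotient.mk b))
      = piTwo ι (br a b)) (a : A) (d : A ⊗[k] A) :
    P (ι (Submodule.Quotient.mk a)) (piTwo ι d) =
      piThree ι (trL br a d) + piThree ι (trL br a (swapT k A d)) := by
  induction d using TensorProduct.induction_on with
  | zero => simp
  | tmul b c =>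
    rw [piTwo_tmul, hP.leibniz_right, hgen, hgen, swapT_tmul, trL_tmul, trL_tmul, piThree_tmul,
      piThree_tmul]
    ring
  | add x y hx hy => simp only [map_add, hx, hy]; ring

/-- The weak Poisson condition makes `π₃ ∘ jac` symmetric in its last two arguments. -/
theorem jacobiator_eq_zero_of_weakPoisson (hP : IsBiderivation P)
    (hgen : ∀ a b : A, P (ι (Submodule.Quotient.mk a)) (ι (Submodule.Quotient.mk b))
      = piTwo ι (br a b))
    (hanti : ∀ a b, br a b = -swapT k A (br b a))
    (hweak : ∀ a b c, jac br a b c = tau12 k A (jac br c b a)) (u v w : A ⧸ commSpan k A) :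
    jacobiator P (ι u) (ι v) (ι w) = 0 := by
  induction u using Submodule.Quotient.induction_on with | H a => ?_
  induction v using Submodule.Quotient.induction_on with | H b => ?_
  induction w using Submodule.Quotient.induction_on with | H c => ?_
  have hswap : ∀ x y, swapT k A (br x y) = -br y x := fun x y => by
    rw [hanti y x, neg_neg]
  have hsymm : piThree ι (jac br a b c) = piThree ι (jac br a c b) := by
    rw [hweak, piThree_tau12, piThree_jac, piThree_jac]
    ring
  rw [piThree_jac, piThree_jac] at hsymm
  simp only [jacobiator, hgen, apply_piTwo_eq_piThree hP hgen, hswap, map_neg]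
  linear_combination hsymm

end InducedBracket

theorem left_right_same_poisson_on_sym_general
    {k A R : Type u} [Field k] [Ring A] [Algebra k A]
    [CommRing R] [Algebra k R]
    (SL : BimodStr k A)
    (hL : ∀ (a b : A) (d : A ⊗[k] A),
      SL.act a d b = (a ⊗ₜ[k] (1 : A)) * d * (b ⊗ₜ[k] (1 : A)))
    (SR : BimodStr k A)
    (D₁ : DoubleBracket SL) (D₂ : DoubleBracket SR)
    (hbr : ∀ a b : A, D₁.br a b = swapT k A (D₂.br a b))
    (hwk : (∀ a b c : A, jac D₁.br a b c = tau12 k A (jac D₁.br c b a)) ∨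
           (∀ a b c : A, jac D₂.br a b c = tau12 k A (jac D₂.br b a c)))
    (ι : (A ⧸ commSpan k A) →ₗ[k] R)
    (hUniv : ∀ (B : Type u) [CommRing B] [Algebra k B]
      (f : (A ⧸ commSpan k A) →ₗ[k] B), ∃! g : R →ₐ[k] B, ∀ q, g (ι q) = f q) :
    ((∀ a b c : A, jac D₁.br a b c = tau12 k A (jac D₁.br c b a)) ∧
     (∀ a b c : A, jac D₂.br a b c = tau12 k A (jac D₂.br b a c))) ∧
    ∃ P : R →ₗ[k] R →ₗ[k] R,
      (∀ x y z : R, P x (y * z) = y * P x z + P x y * z) ∧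
      (∀ x y z : R, P (x * y) z = x * P y z + y * P x z) ∧
      (∀ a b : A, P (ι (Submodule.Quotient.mk a)) (ι (Submodule.Quotient.mk b))
        = piTwo ι (D₁.br a b)) ∧
      (∀ a b : A, P (ι (Submodule.Quotient.mk a)) (ι (Submodule.Quotient.mk b))
        = piTwo ι (D₂.br a b)) ∧
      (∀ x y : R, P x y = - P y x) ∧
      (∀ x y z : R, P x (P y z) + P y (P z x) + P z (P x y) = 0) ∧
      (∀ P' : R →ₗ[k] R →ₗ[k] R,
        (∀ x y z : R, P' x (y * z) = y * P' x z + P' x y * z) →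
        (∀ x y z : R, P' (x * y) z = x * P' y z + y * P' x z) →
        ((∀ a b : A, P' (ι (Submodule.Quotient.mk a)) (ι (Submodule.Quotient.mk b))
            = piTwo ι (D₁.br a b)) ∨
         (∀ a b : A, P' (ι (Submodule.Quotient.mk a)) (ι (Submodule.Quotient.mk b))
            = piTwo ι (D₂.br a b))) → P' = P) := by
  have hweak₁ : ∀ a b c : A, jac D₁.br a b c = tau12 k A (jac D₁.br c b a) :=
    hwk.elim id (weakPoisson_swapT_iff hbr D₁.antisymm).mp
  have hsym : IsSymmetricAlgebra ι := isSymmetricAlgebra_of_existsUnique hUniv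
  obtain ⟨B, hB⟩ := D₁.exists_bilin_quotient_piTwo_br ι hL
  obtain ⟨P, hP, hPB⟩ := hsym.exists_biderivation B
  have hP₁ : ∀ a b : A, P (ι (Submodule.Quotient.mk a)) (ι (Submodule.Quotient.mk b))
      = piTwo ι (D₁.br a b) := fun a b => by rw [hPB, hB]
  have hP₂ : ∀ a b : A, P (ι (Submodule.Quotient.mk a)) (ι (Submodule.Quotient.mk b))
      = piTwo ι (D₂.br a b) := fun a b => by rw [hP₁, hbr, piTwo_swapT]
  have hanti : ∀ x y : R, P x y = -P y x := hsym.antisymm_of_biderivation hP fun v w => by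
    induction v using Submodule.Quotient.induction_on with | H a => ?_
    induction w using Submodule.Quotient.induction_on with | H b => ?_
    rw [hP₁, hP₁, D₁.piTwo_br_swap]
  refine ⟨⟨hweak₁, (weakPoisson_swapT_iff hbr D₁.antisymm).mpr hweak₁⟩, P, hP.leibniz_right,
    hP.leibniz_left, hP₁, hP₂, hanti,
    hsym.jacobiator_eq_zero hP hanti (jacobiator_eq_zero_of_weakPoisson hP hP₁ D₁.antisymm hweak₁),
    fun P' hP'₁ hP'₂ hgen => hsym.biderivation_ext ⟨hP'₁, hP'₂⟩ hP fun v w => ?_⟩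
  induction v using Submodule.Quotient.induction_on with | H a => ?_
  induction w using Submodule.Quotient.induction_on with | H b => ?_
  rcases hgen with h | h
  · rw [h, hP₁]
  · rw [h, hP₂]

/-- Theorem `Thm-LR`: for swap-equivalent double brackets `⟪-,-⟫₁`
(left bimodule structure) and `⟪-,-⟫₂` (right bimodule structure), if either `⟪-,-⟫₁` is
`[(12),(13)]`-weak Poisson or `⟪-,-⟫₂` is `(12)`-weak Poisson then both hold, and the two
double brackets induce the same Poisson bracket on `Sym(A/[A,A])` (here modelled by a
commutative algebra `R` with the universal property of the symmetric algebra of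
`A/[A,A]`). -/
theorem left_right_same_poisson_on_sym
    {k A R : Type u} [Field k] [CharZero k] [Ring A] [Algebra k A]
    [CommRing R] [Algebra k R]
    (SL : BimodStr k A)
    (hL : ∀ (a b : A) (d : A ⊗[k] A),
      SL.act a d b = (a ⊗ₜ[k] (1 : A)) * d * (b ⊗ₜ[k] (1 : A)))
    (SR : BimodStr k A)
    (hR : ∀ (a b : A) (d : A ⊗[k] A),
      SR.act a d b = ((1 : A) ⊗ₜ[k] a) * d * ((1 : A) ⊗ₜ[k] b))
    (D₁ : DoubleBracket SL) (D₂ : DoubleBracket SR)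
    (hbr : ∀ a b : A, D₁.br a b = swapT k A (D₂.br a b))
    (hwk : (∀ a b c : A, jac D₁.br a b c = tau12 k A (jac D₁.br c b a)) ∨
           (∀ a b c : A, jac D₂.br a b c = tau12 k A (jac D₂.br b a c)))
    (ι : (A ⧸ commSpan k A) →ₗ[k] R)
    (hUniv : ∀ (B : Type u) [CommRing B] [Algebra k B]
      (f : (A ⧸ commSpan k A) →ₗ[k] B), ∃! g : R →ₐ[k] B, ∀ q, g (ι q) = f q) :
    ((∀ a b c : A, jac D₁.br a b c = tau12 k A (jac D₁.br c b a)) ∧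
     (∀ a b c : A, jac D₂.br a b c = tau12 k A (jac D₂.br b a c))) ∧
    ∃ P : R →ₗ[k] R →ₗ[k] R,
      (∀ x y z : R, P x (y * z) = y * P x z + P x y * z) ∧
      (∀ x y z : R, P (x * y) z = x * P y z + y * P x z) ∧
      (∀ a b : A, P (ι (Submodule.Quotient.mk a)) (ι (Submodule.Quotient.mk b))
        = piTwo ι (D₁.br a b)) ∧
      (∀ a b : A, P (ι (Submodule.Quotient.mk a)) (ι (Submodule.Quotient.mk b))
        = piTwo ι (D₂.br a b)) ∧
      (∀ x y : R, P x y = - P y x) ∧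
      (∀ x y z : R, P x (P y z) + P y (P z x) + P z (P x y) = 0) ∧
      (∀ P' : R →ₗ[k] R →ₗ[k] R,
        (∀ x y z : R, P' x (y * z) = y * P' x z + P' x y * z) →
        (∀ x y z : R, P' (x * y) z = x * P' y z + y * P' x z) →
        ((∀ a b : A, P' (ι (Submodule.Quotient.mk a)) (ι (Submodule.Quotient.mk b))
            = piTwo ι (D₁.br a b)) ∨
         (∀ a b : A, P' (ι (Submodule.Quotient.mk a)) (ι (Submodule.Quotient.mk b))
            = piTwo ι (D₂.br a b))) → P' = P) :=
  left_right_same_poisson_on_sym_general SL hL SR D₁ D₂ hbr hwk ι hUniv
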